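/- Let (C, ▷, †) be a guarded Conway category and define Tr_† as above. Then Tr_† satisfies superposing: for f : ▷X × A → X × B, Tr^X_{A×C, B×C}(f × id_C) = Tr^X_{A,B}(f) × id_C, where f × id_C is interpreted along the canonical isomorphism ▷X × (A × C) ≅ (▷X × A) × C. -/

import Mathlib

open CategoryTheory CategoryTheory.Limits

/-- The trace induced by a guarded dagger:
`Tr^X_{A,B}(f) = π_r ∘ f ∘ (p_X × id_A) ∘ ⟨(π_ℓ ∘ f)†, id_A⟩`. -/
noncomputable def TrD {C : Type*} [Category C] [HasFiniteProducts C]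
    (F : C ⥤ C) (p : 𝟭 C ⟶ F)
    (dag : ∀ {X Y : C}, (F.obj X ⨯ Y ⟶ X) → (Y ⟶ X))
    {X A B : C} (f : F.obj X ⨯ A ⟶ X ⨯ B) : A ⟶ B :=
  prod.lift (dag (f ≫ prod.fst)) (𝟙 A) ≫ prod.map (p.app X) (𝟙 A) ≫ f ≫ prod.snd

/-! The `X`-component of the superposed map ignores `D`, so by uniformity in the parameter
its dagger is the dagger of `π_ℓ ∘ f` precomposed with the projection `A × D → A`; the rest is
bookkeeping with products. -/

section Superpose

variable {C : Type*} [Category C] [HasBinaryProducts C]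

noncomputable def superpose {P A X B : C} (f : P ⨯ A ⟶ X ⨯ B) (D : C) :
    P ⨯ (A ⨯ D) ⟶ X ⨯ (B ⨯ D) :=
  (prod.associator P A D).inv ≫ prod.map f (𝟙 D) ≫ (prod.associator X B D).hom

theorem superpose_fst {P A X B : C} (f : P ⨯ A ⟶ X ⨯ B) (D : C) :
    superpose f D ≫ prod.fst = prod.map (𝟙 P) prod.fst ≫ f ≫ prod.fst := by
  have hassoc :
      prod.lift prod.fst (prod.snd ≫ prod.fst) = prod.map (𝟙 P) (prod.fst : A ⨯ D ⟶ A) := by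
    ext <;> simp [prod.lift_fst, prod.lift_snd]
  simp [superpose, prod.lift_fst, prod.lift_fst_assoc, hassoc]

theorem lift_superpose_snd {P A X B : C} (f : P ⨯ A ⟶ X ⨯ B) (D : C) (k : A ⟶ P) :
    prod.lift (prod.fst ≫ k) (𝟙 (A ⨯ D)) ≫ superpose f D ≫ prod.snd
      = prod.map (prod.lift k (𝟙 A) ≫ f ≫ prod.snd) (𝟙 D) := by
  have hassoc : prod.lift (prod.fst ≫ k) (𝟙 (A ⨯ D)) ≫ prod.lift prod.fst (prod.snd ≫ prod.fst)
      = prod.fst ≫ prod.lift k (𝟙 A) := by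
    ext <;> simp [prod.lift_fst, prod.lift_snd, prod.lift_snd_assoc]
  ext <;> simp [superpose, prod.lift_fst, prod.lift_snd, prod.lift_fst_assoc,
    prod.lift_snd_assoc, reassoc_of% hassoc]

end Superpose

theorem TrD_eq_lift {C : Type*} [Category C] [HasFiniteProducts C] (F : C ⥤ C) (p : 𝟭 C ⟶ F)
    (dag : ∀ {X Y : C}, (F.obj X ⨯ Y ⟶ X) → (Y ⟶ X)) {X A B : C} (f : F.obj X ⨯ A ⟶ X ⨯ B) :
    TrD F p @dag f = prod.lift (dag (f ≫ prod.fst) ≫ p.app X) (𝟙 A) ≫ f ≫ prod.snd := by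
  rw [TrD, prod.lift_map_assoc, Category.comp_id]

theorem stmt14_general {C : Type*} [Category C] [HasFiniteProducts C]
    (F : C ⥤ C) (p : 𝟭 C ⟶ F)
    (dag : ∀ {X Y : C}, (F.obj X ⨯ Y ⟶ X) → (Y ⟶ X))
    (hparam : ∀ {X Y Z : C} (f : F.obj X ⨯ Y ⟶ X) (h : Z ⟶ Y),
      h ≫ dag f = dag (prod.map (𝟙 (F.obj X)) h ≫ f)) :
    ∀ {X A B D : C} (f : F.obj X ⨯ A ⟶ X ⨯ B),
      TrD F p @dag ((prod.associator (F.obj X) A D).inv ≫ prod.map f (𝟙 D) ≫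
          (prod.associator X B D).hom)
        = prod.map (TrD F p @dag f) (𝟙 D) := by
  intro X A B D f
  have hdag : dag (superpose f D ≫ prod.fst) = prod.fst ≫ dag (f ≫ prod.fst) := by
    rw [superpose_fst, hparam]
  rw [← superpose, TrD_eq_lift, TrD_eq_lift, hdag, Category.assoc, lift_superpose_snd]

/-- In a guarded Conway category `(C, ▷, †)`, the induced trace `Tr_†` satisfies
superposing: `Tr^X_{A×D, B×D}(f × id_D) = Tr^X_{A,B}(f) × id_D`, where `f × id_D` is
transported along the canonical associativity isomorphisms. -/
theorem stmt14 {C : Type*} [Category C] [HasFiniteProducts C]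
    (F : C ⥤ C) (p : 𝟭 C ⟶ F)
    (dag : ∀ {X Y : C}, (F.obj X ⨯ Y ⟶ X) → (Y ⟶ X))
    (hfix : ∀ {X Y : C} (f : F.obj X ⨯ Y ⟶ X),
      dag f = prod.lift (dag f) (𝟙 Y) ≫ prod.map (p.app X) (𝟙 Y) ≫ f)
    (hparam : ∀ {X Y Z : C} (f : F.obj X ⨯ Y ⟶ X) (h : Z ⟶ Y),
      h ≫ dag f = dag (prod.map (𝟙 (F.obj X)) h ≫ f))
    (hcomp : ∀ {X Y Z : C} (f : F.obj X ⨯ Y ⟶ Z) (g : Z ⟶ X),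
      dag (f ≫ g) = dag (prod.map (F.map g) (𝟙 Y) ≫ f) ≫ g)
    (hdd : ∀ {X Y : C} (f : F.obj X ⨯ (F.obj X ⨯ Y) ⟶ X),
      dag (dag f) =
        dag (prod.lift (prod.fst : F.obj X ⨯ Y ⟶ F.obj X) (𝟙 (F.obj X ⨯ Y)) ≫ f)) :
    ∀ {X A B D : C} (f : F.obj X ⨯ A ⟶ X ⨯ B),
      TrD F p @dag ((prod.associator (F.obj X) A D).inv ≫ prod.map f (𝟙 D) ≫
          (prod.associator X B D).hom)
        = prod.map (TrD F p @dag f) (𝟙 D) :=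
  stmt14_general F p dag hparam
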